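/- There exists a univariate polynomial S ∈ ℝ[X] such that, as polynomials in ℝ[x,y], Q − Q̃ = S(P); that is, the two Pinchuk maps (P,Q) and (P,Q̃) differ by the triangular polynomial automorphism (p,q) ↦ (p, q + S(p)) of the image plane. -/

import Mathlib

open MvPolynomial

/-- `t = xy − 1`, with `X 0 = x`, `X 1 = y`. -/
noncomputable def tP : MvPolynomial (Fin 2) ℝ := X 0 * X 1 - 1

/-- `h = t(xt + 1)`. -/
noncomputable def hP : MvPolynomial (Fin 2) ℝ := tP * (X 0 * tP + 1)

/-- `f = (xt + 1)²(t² + y)`. -/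
noncomputable def fP : MvPolynomial (Fin 2) ℝ := (X 0 * tP + 1) ^ 2 * (tP ^ 2 + X 1)

/-- `P = f + h`. -/
noncomputable def PP : MvPolynomial (Fin 2) ℝ := fP + hP

/-- The auxiliary polynomial `u(f,h)`. -/
noncomputable def uP : MvPolynomial (Fin 2) ℝ :=
  170 * fP * hP + 91 * hP ^ 2 + 195 * fP * hP ^ 2 + 69 * hP ^ 3 + 75 * fP * hP ^ 3 +
    C (75 / 4 : ℝ) * hP ^ 4

/-- `Q = −t² − 6th(h + 1) − u(f,h)`. -/
noncomputable def QP : MvPolynomial (Fin 2) ℝ := -tP ^ 2 - 6 * tP * hP * (hP + 1) - uP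

/-- `ũ(f,h) = −(1/4)f(75f³ + 300f²h + 450fh² + 276f² + 828fh + 48h² + 364f + 48h)`. -/
noncomputable def utP : MvPolynomial (Fin 2) ℝ :=
  -(C (1 / 4 : ℝ)) * fP *
    (75 * fP ^ 3 + 300 * fP ^ 2 * hP + 450 * fP * hP ^ 2 + 276 * fP ^ 2 + 828 * fP * hP +
      48 * hP ^ 2 + 364 * fP + 48 * hP)

/-- `Q̃ = −t² − 6th(h + 1) − ũ(f,h)`, the second coordinate of the "original"
Pinchuk map. -/
noncomputable def QtP : MvPolynomial (Fin 2) ℝ := -tP ^ 2 - 6 * tP * hP * (hP + 1) - utP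

/-! Since `Q` and `Q̃` share the terms `−t² − 6th(h + 1)`, `Q − Q̃ = ũ(f,h) − u(f,h)`, and this
difference depends on `f` and `h` only through `P = f + h`: it is `S(f + h)` with
`S = −(75/4)X⁴ − 69X³ − 91X²`. -/

noncomputable def pinchukShift : Polynomial ℝ :=
  -(Polynomial.C (75 / 4) * Polynomial.X ^ 4) - 69 * Polynomial.X ^ 3 - 91 * Polynomial.X ^ 2

section

variable {A : Type*} [CommRing A] [Algebra ℝ A]

lemma aeval_pinchukShift (p : A) :
    Polynomial.aeval p pinchukShift =
      -(algebraMap ℝ A (75 / 4) * p ^ 4) - 69 * p ^ 3 - 91 * p ^ 2 := by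
  simp [pinchukShift, Polynomial.aeval_def, Polynomial.eval₂_ofNat]

lemma pinchuk_ut_sub_u_eq_aeval_add (f h : A) :
    -(algebraMap ℝ A (1 / 4)) * f *
        (75 * f ^ 3 + 300 * f ^ 2 * h + 450 * f * h ^ 2 + 276 * f ^ 2 + 828 * f * h +
          48 * h ^ 2 + 364 * f + 48 * h) -
      (170 * f * h + 91 * h ^ 2 + 195 * f * h ^ 2 + 69 * h ^ 3 + 75 * f * h ^ 3 +
        algebraMap ℝ A (75 / 4) * h ^ 4) =
    Polynomial.aeval (f + h) pinchukShift := by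
  set c := algebraMap ℝ A (1 / 4)
  have hc : 4 * c = 1 := by
    rw [← map_ofNat (algebraMap ℝ A) 4, ← map_mul]; norm_num
  have h75 : algebraMap ℝ A (75 / 4) = 75 * c := by
    rw [← map_ofNat (algebraMap ℝ A) 75, ← map_mul]; norm_num
  rw [aeval_pinchukShift, h75]
  linear_combination
    (75 * f * h ^ 3 - 69 * f ^ 3 - 207 * f ^ 2 * h - 12 * f * h ^ 2 - 91 * f ^ 2 - 12 * f * h) * hc

end

/-- The two Pinchuk maps `(P,Q)` and `(P,Q̃)` differ by a triangular polynomial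
automorphism of the image plane: `Q − Q̃ = S(P)` for some univariate `S`. -/
theorem pinchuk_maps_differ_by_triangular_automorphism :
    ∃ S : Polynomial ℝ, QP - QtP = Polynomial.aeval PP S := by
  refine ⟨pinchukShift, ?_⟩
  have hQ : QP - QtP = utP - uP := by
    simp only [QP, QtP]; ring
  rw [hQ, PP]
  exact pinchuk_ut_sub_u_eq_aeval_add fP hP
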